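/- arXiv:1204.2418 — 3 statements merged into one kernel-verified Lean document; each statement's English description precedes it below -/
import Mathlib

section
/- Let V be a finite-dimensional real vector space, let s be an inner product on V (a bijective element of Sym(V) with s(v,v) ≥ 0 for all v), and let u ∈ Sym(V). Then tr(s⁻¹ ∘ u ∘ s⁻¹ ∘ u) ≥ 0, and tr(s⁻¹ ∘ u ∘ s⁻¹ ∘ u) = 0 if and only if u = 0. Consequently g_s(u,v) := tr(s⁻¹ ∘ v ∘ s⁻¹ ∘ u) defines an inner product on the vector space Sym(V). -/
/-! The inner product `s` makes `V` a Euclidean space in which `A := s⁻¹ ∘ u` is self-adjoint,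
so `tr(s⁻¹ ∘ u ∘ s⁻¹ ∘ u) = tr(A* ∘ A)` is the squared Frobenius norm of `A`. -/

open scoped ComplexOrder

namespace LinearMap

section Adjoint

variable {𝕜 E F : Type*} [RCLike 𝕜]
  [NormedAddCommGroup E] [InnerProductSpace 𝕜 E] [FiniteDimensional 𝕜 E]
  [NormedAddCommGroup F] [InnerProductSpace 𝕜 F] [FiniteDimensional 𝕜 F]

theorem trace_adjoint_comp_self_eq_zero_iff (S : E →ₗ[𝕜] F) :
    trace 𝕜 E (S.adjoint ∘ₗ S) = 0 ↔ S = 0 := by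
  let bE := stdOrthonormalBasis 𝕜 E
  let bF := stdOrthonormalBasis 𝕜 F
  rw [trace_eq_matrix_trace 𝕜 bE.toBasis, toMatrix_comp bE.toBasis bF.toBasis bE.toBasis,
    toMatrix_adjoint, Matrix.trace_conjTranspose_mul_self_eq_zero_iff,
    LinearEquiv.map_eq_zero_iff]

theorem IsSymmetric.trace_comp_self_nonneg {A : E →ₗ[𝕜] E} (hA : A.IsSymmetric) :
    0 ≤ trace 𝕜 E (A ∘ₗ A) := by
  simpa only [hA.adjoint_eq] using A.isPositive_adjoint_comp_self.trace_nonneg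

theorem IsSymmetric.trace_comp_self_eq_zero_iff {A : E →ₗ[𝕜] E} (hA : A.IsSymmetric) :
    trace 𝕜 E (A ∘ₗ A) = 0 ↔ A = 0 := by
  simpa only [hA.adjoint_eq] using A.trace_adjoint_comp_self_eq_zero_iff

end Adjoint

namespace BilinForm

variable {V : Type*} [AddCommGroup V] [Module ℝ V]

abbrev innerProductSpaceCore (B : LinearMap.BilinForm ℝ V) (hB : LinearMap.IsSymm B)
    (hB_nonneg : ∀ x, 0 ≤ B x x) (hB_inj : Function.Injective B) :
    InnerProductSpace.Core ℝ V where
  inner x y := B x y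
  conj_inner_symm x y := by simpa using hB.eq y x
  re_inner_nonneg := hB_nonneg
  add_left x y z := by simp
  smul_left x y r := by simp
  definite x hx := by
    rw [B.apply_apply_same_eq_zero_iff hB_nonneg hB] at hx
    exact hB_inj.eq_iff' B.map_zero |>.mp hx

end BilinForm

end LinearMap

/-- For an inner product `s` on a finite-dimensional real vector space `V` and a
symmetric `u ∈ Sym(V)`, one has `tr(s⁻¹ ∘ u ∘ s⁻¹ ∘ u) ≥ 0`, with equality iff
`u = 0`; hence `g_s(u,v) := tr(s⁻¹ ∘ v ∘ s⁻¹ ∘ u)` is an inner product on `Sym(V)`. -/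
theorem trace_sq_nonneg_and_eq_zero_iff
    (V : Type*) [AddCommGroup V] [Module ℝ V] [FiniteDimensional ℝ V]
    (s : V ≃ₗ[ℝ] Module.Dual ℝ V)
    (hs_symm : ∀ v w : V, s v w = s w v)
    (hs_pos : ∀ v : V, 0 ≤ s v v)
    (u : V →ₗ[ℝ] Module.Dual ℝ V)
    (hu_symm : ∀ x y : V, u x y = u y x) :
    0 ≤ LinearMap.trace ℝ V
        (s.symm.toLinearMap ∘ₗ u ∘ₗ s.symm.toLinearMap ∘ₗ u) ∧
    (LinearMap.trace ℝ V
        (s.symm.toLinearMap ∘ₗ u ∘ₗ s.symm.toLinearMap ∘ₗ u) = 0 ↔ u = 0) := by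
  let core :=
    LinearMap.BilinForm.innerProductSpaceCore s.toLinearMap ⟨hs_symm⟩ hs_pos s.injective
  let _ : NormedAddCommGroup V := core.toNormedAddCommGroup
  let _ : InnerProductSpace ℝ V := .ofCore core.toCore
  have hA : (s.symm.toLinearMap ∘ₗ u).IsSymmetric := fun x y => by
    change s (s.symm (u x)) y = s x (s.symm (u y))
    rw [s.apply_symm_apply, hs_symm, s.apply_symm_apply, hu_symm]
  have hA_eq_zero : s.symm.toLinearMap ∘ₗ u = 0 ↔ u = 0 := by simp [LinearMap.ext_iff]
  exact ⟨hA.trace_comp_self_nonneg, hA.trace_comp_self_eq_zero_iff.trans hA_eq_zero⟩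
end

section
/- Gradient of the volume function. Let V be a finite-dimensional real vector space with inner product s (a bijective element of Sym(V) with s(v,v) ≥ 0), let v₁,…,v_m ∈ V be linearly independent with span W, write vol_ξ²(s) = det((s(v_i,v_j))_{i,j}), let P : V → V be the s-orthogonal projection onto W, and set s_ξ := s ∘ P ∈ Sym(V). Then for every u ∈ Sym(V) the function t ↦ det(((s + t·u)(v_i,v_j))_{i,j}) is differentiable at t = 0 with derivative g_s(vol_ξ²(s) · s_ξ, u), where g_s(a,b) := tr(s⁻¹ ∘ b ∘ s⁻¹ ∘ a). That is, the gradient of vol_ξ² with respect to the Riemannian metric g at s is vol_ξ²(s) · s_ξ. -/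
/-!
Let `G` and `U` be the Gram matrices of the `vᵢ` under `s` and `u`. Then
`det (G + t U) = det G · det (1 + t G⁻¹U)`, whose derivative at `0` is `det G · tr (G⁻¹U)`
by Jacobi's formula; `G` is invertible because a nondegenerate positive semidefinite form
is definite. On the other side, `s⁻¹ ∘ u ∘ s⁻¹ ∘ (s ∘ P) = s⁻¹u ∘ P`, and as `P` factors
through `W` its trace is that of the compression `P ∘ s⁻¹u` restricted to `W`. Since `P` is
`s`-self-adjoint and fixes `W`, the matrix of that compression in the basis `(vᵢ)` is
`G⁻¹U`.
-/

open Matrix Polynomial LinearMap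

theorem Matrix.hasDerivAt_det_one_add_smul {𝕜 n : Type*} [NontriviallyNormedField 𝕜]
    [Fintype n] [DecidableEq n] (M : Matrix n n 𝕜) :
    HasDerivAt (fun t : 𝕜 => det (1 + t • M)) (trace M) 0 := by
  have h := (det (1 + (X : 𝕜[X]) • M.map C)).hasDerivAt 0
  rw [derivative_det_one_add_X_smul] at h
  convert h using 2 with t
  simp [eval_det, ← smul_eq_mul_diagonal]

theorem Matrix.hasDerivAt_det_add_smul {𝕜 n : Type*} [NontriviallyNormedField 𝕜]
    [Fintype n] [DecidableEq n] {G : Matrix n n 𝕜} (hG : IsUnit G.det) (U : Matrix n n 𝕜) :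
    HasDerivAt (fun t : 𝕜 => det (G + t • U)) (det G * trace (G⁻¹ * U)) 0 := by
  have hfactor (t : 𝕜) : G + t • U = G * (1 + t • (G⁻¹ * U)) := by
    rw [Matrix.mul_add, Matrix.mul_one, Matrix.mul_smul, Matrix.mul_nonsing_inv_cancel_left _ _ hG]
  simp_rw [hfactor, det_mul]
  exact (hasDerivAt_det_one_add_smul _).const_mul _

theorem LinearMap.BilinForm.det_gram_ne_zero {K V ι : Type*} [Field K] [LinearOrder K]
    [IsStrictOrderedRing K] [AddCommGroup V] [Module K V] [Fintype ι] [DecidableEq ι]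
    (B : LinearMap.BilinForm K V) (hB : LinearMap.IsSymm B) (hs : ∀ x, 0 ≤ B x x)
    (hker : LinearMap.ker B = ⊥) {v : ι → V} (hv : LinearIndependent K v) :
    (Matrix.of fun i j => B (v i) (v j)).det ≠ 0 := by
  have hnd := (B.nondegenerate_restrict_iff_disjoint_ker hs hB
    (W := Submodule.span K (Set.range v))).2 (by simp [hker])
  convert (BilinForm.nondegenerate_iff_det_ne_zero (Module.Basis.span hv)).1 hnd using 2
  ext i j
  simp [BilinForm.toMatrix, toMatrix₂_apply, Module.Basis.span_apply, domRestrict₁₂_apply]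

theorem LinearMap.trace_comp_eq_trace_codRestrict_comp {R M : Type*} [CommRing R]
    [AddCommGroup M] [Module R M] [Module.Free R M] [Module.Finite R M]
    (W : Submodule R M) [Module.Free R W] [Module.Finite R W]
    (f P : M →ₗ[R] M) (hP : ∀ x, P x ∈ W) :
    trace R M (f ∘ₗ P) = trace R W (P.codRestrict W hP ∘ₗ f ∘ₗ W.subtype) := by
  conv_lhs => rw [← subtype_comp_codRestrict P W hP, ← comp_assoc, trace_comp_comm']

theorem LinearMap.trace_comp_eq_trace_inv_gram_mul {K V ι : Type*} [Field K] [AddCommGroup V]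
    [Module K V] [FiniteDimensional K V] [Fintype ι] [DecidableEq ι]
    (B : LinearMap.BilinForm K V) {v : ι → V} (hv : LinearIndependent K v) {P : V →ₗ[K] V}
    (hP_idem : P ∘ₗ P = P) (hP_range : range P = Submodule.span K (Set.range v))
    (hP_sa : ∀ x y, B (P x) y = B x (P y)) (hG : IsUnit (of fun i j => B (v i) (v j)).det)
    (f : V →ₗ[K] V) :
    trace K V (f ∘ₗ P) =
      ((of fun i j => B (v i) (v j))⁻¹ * of fun i j => B (v i) (f (v j))).trace := by
  set W := Submodule.span K (Set.range v)
  set b := Module.Basis.span hv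
  have hPW (x : V) : P x ∈ W := hP_range ▸ mem_range_self P x
  have hPv (i : ι) : P (v i) = v i := by
    obtain ⟨y, hy⟩ : v i ∈ range P := hP_range ▸ Submodule.subset_span ⟨i, rfl⟩
    rw [← hy, ← comp_apply, hP_idem]
  set E := P.codRestrict W hPW ∘ₗ f ∘ₗ W.subtype
  have hcompression : toMatrix₂ b b (B.domRestrict₁₂ W W) * toMatrix b b E =
      of fun i j => B (v i) (f (v j)) := by
    rw [← toMatrix₂_compl₂]
    ext i j
    simp [toMatrix₂_apply, b, Module.Basis.span_apply, E, domRestrict₁₂_apply, ← hP_sa, hPv]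
  have hgramW : toMatrix₂ b b (B.domRestrict₁₂ W W) = of fun i j => B (v i) (v j) := by
    ext i j
    simp [toMatrix₂_apply, b, Module.Basis.span_apply, domRestrict₁₂_apply]
  rw [trace_comp_eq_trace_codRestrict_comp W f P hPW, trace_eq_matrix_trace K b, ← hcompression,
    hgramW, nonsing_inv_mul_cancel_left _ _ hG]

/-- Gradient of the volume function: with `s_ξ := s ∘ P` for the `s`-orthogonal
projection `P` onto `W = span(v₁,…,v_m)`, the function
`t ↦ det(((s + t·u)(vᵢ,vⱼ))ᵢⱼ)` has, at `t = 0`, the derivative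
`g_s(vol_ξ²(s) · s_ξ, u) = tr(s⁻¹ ∘ u ∘ s⁻¹ ∘ (vol_ξ²(s) · s_ξ))`,
i.e. the gradient of `vol_ξ²` at `s` with respect to `g` is `vol_ξ²(s) · s_ξ`. -/
theorem gradient_of_volume_function
    (V : Type*) [AddCommGroup V] [Module ℝ V] [FiniteDimensional ℝ V]
    (s : V ≃ₗ[ℝ] Module.Dual ℝ V)
    (hs_symm : ∀ x y : V, s x y = s y x)
    (hs_pos : ∀ x : V, 0 ≤ s x x)
    (u : V →ₗ[ℝ] Module.Dual ℝ V)
    (hu_symm : ∀ x y : V, u x y = u y x)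
    (m : ℕ) (v : Fin m → V) (hv : LinearIndependent ℝ v)
    (P : V →ₗ[ℝ] V)
    (hP_idem : P ∘ₗ P = P)
    (hP_range : LinearMap.range P = Submodule.span ℝ (Set.range v))
    (hP_sa : ∀ x y : V, s (P x) y = s x (P y)) :
    HasDerivAt
      (fun t : ℝ => Matrix.det (Matrix.of fun i j => s (v i) (v j) + t * u (v i) (v j)))
      (LinearMap.trace ℝ V
        (s.symm.toLinearMap ∘ₗ u ∘ₗ s.symm.toLinearMap ∘ₗ
          (Matrix.det (Matrix.of fun i j => s (v i) (v j)) • (s.toLinearMap ∘ₗ P))))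
      0 := by
  set G := of fun i j => s (v i) (v j)
  set U := of fun i j => u (v i) (v j)
  have hG : IsUnit G.det := (BilinForm.det_gram_ne_zero s.toLinearMap ⟨hs_symm⟩ hs_pos
    (ker_eq_bot.2 s.injective) hv).isUnit
  have htrace : trace ℝ V (s.symm.toLinearMap ∘ₗ u ∘ₗ s.symm.toLinearMap ∘ₗ
      (G.det • (s.toLinearMap ∘ₗ P))) = G.det * (G⁻¹ * U).trace := by
    have hfactor : s.symm.toLinearMap ∘ₗ u ∘ₗ s.symm.toLinearMap ∘ₗ
        (G.det • (s.toLinearMap ∘ₗ P)) = G.det • ((s.symm.toLinearMap ∘ₗ u) ∘ₗ P) := by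
      ext
      simp
    rw [hfactor, map_smul, trace_comp_eq_trace_inv_gram_mul s.toLinearMap hv hP_idem hP_range
      hP_sa hG]
    congr
    ext i j
    simp [hs_symm (v i), hu_symm (v j)]
  rw [htrace]
  exact hasDerivAt_det_add_smul hG U
end

section
/- Let T be a finite abelian group and k a natural number, and consider the abelian group A = ℤᵏ × T. Every automorphism φ of A maps the torsion subgroup {0} × T to itself and induces automorphisms φ₁ of ℤᵏ ≅ A/T and φ₂ of T; the resulting map Aut(A) → Aut(ℤᵏ) × Aut(T), φ ↦ (φ₁, φ₂), is a surjective group homomorphism whose kernel is isomorphic, as a group, to the additive group Hom(ℤᵏ, T). In particular there is a short exact sequence of groups 1 → Hom(ℤᵏ, T) → Aut(ℤᵏ × T) → Aut(ℤᵏ) × Aut(T) → 1. -/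
/-!
Since `ℤᵏ` is torsion-free and `T` is torsion, `Hom(T, ℤᵏ) = 0`, so every automorphism `φ` of
`ℤᵏ × T` is triangular: `φ (x, t) = (a x, c x + b t)` with `a ∈ Aut(ℤᵏ)`, `b ∈ Aut(T)` and
`c ∈ Hom(ℤᵏ, T)`. The map `φ ↦ (a, b)` is then a homomorphism, split by `(a, b) ↦ a × b`, and
its kernel is the image of the injective homomorphism `c ↦ ((x, t) ↦ (x, t + c x))`.
-/

open Multiplicative

theorem AddMonoidHom.subsingleton_of_isAddTorsion {T M : Type*} [AddMonoid T] [AddMonoid M]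
    [IsAddTorsionFree M] (hT : IsAddTorsion T) : Subsingleton (T →+ M) :=
  ⟨fun f g => ext fun t =>
    (f.isOfFinAddOrder (hT t)).eq_zero'.trans (g.isOfFinAddOrder (hT t)).eq_zero'.symm⟩

namespace AddAut

variable {M T : Type*} [AddCommGroup M] [AddCommGroup T]

def shear (f : M →+ T) : AddAut (M × T) where
  toFun p := (p.1, p.2 + f p.1)
  invFun p := (p.1, p.2 - f p.1)
  left_inv p := by simp
  right_inv p := by simp
  map_add' p q := by
    simp only [Prod.fst_add, Prod.snd_add, map_add, Prod.mk_add_mk, add_add_add_comm]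

@[simp]
theorem shear_apply (f : M →+ T) (p : M × T) : shear f p = (p.1, p.2 + f p.1) := rfl

def shearHom : (M →+ T) →+ AddAut (M × T) where
  toFun := shear
  map_zero' := AddEquiv.ext fun p => by simp
  map_add' f g := AddEquiv.ext fun p => by simp [add_assoc, add_comm (f p.1)]

theorem shearHom_injective : Function.Injective (shearHom : (M →+ T) →+ AddAut (M × T)) :=
  fun f g h => AddMonoidHom.ext fun x => by
    simpa [shearHom] using congrArg Prod.snd (DFunLike.congr_fun h (x, 0))

variable [Subsingleton (T →+ M)]

theorem fst_apply_zero_mk (φ : AddAut (M × T)) (t : T) : (φ (0, t)).1 = 0 :=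
  DFunLike.congr_fun (Subsingleton.elim
    ((AddMonoidHom.fst M T).comp (φ.toAddMonoidHom.comp (AddMonoidHom.inr M T))) 0) t

theorem apply_zero_mk (φ : AddAut (M × T)) (t : T) : φ (0, t) = (0, (φ (0, t)).2) :=
  Prod.ext (fst_apply_zero_mk φ t) rfl

theorem fst_apply (φ : AddAut (M × T)) (p : M × T) : (φ p).1 = (φ (p.1, 0)).1 := by
  conv_lhs => rw [← Prod.fst_add_snd p, map_add, Prod.fst_add, fst_apply_zero_mk, add_zero]

def inducedFst (φ : AddAut (M × T)) : AddAut M where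
  toFun x := (φ (x, 0)).1
  invFun x := (φ.symm (x, 0)).1
  left_inv x := by
    dsimp only
    rw [← fst_apply φ.symm, φ.symm_apply_apply]
  right_inv x := by
    dsimp only
    rw [← fst_apply φ, φ.apply_symm_apply]
  map_add' x y := by
    rw [← Prod.fst_add, ← map_add, Prod.mk_add_mk, add_zero]

def inducedSnd (φ : AddAut (M × T)) : AddAut T where
  toFun t := (φ (0, t)).2
  invFun t := (φ.symm (0, t)).2
  left_inv t := by
    dsimp only
    rw [← apply_zero_mk φ, φ.symm_apply_apply]
  right_inv t := by
    dsimp only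
    rw [← apply_zero_mk φ.symm, φ.apply_symm_apply]
  map_add' s t := by
    rw [← Prod.snd_add, ← map_add, Prod.mk_add_mk, add_zero]

-- The group law of `AddAut` is composition: `(φ + ψ) p = φ (ψ p)`.
def inducedFstHom : AddAut (M × T) →+ AddAut M where
  toFun := inducedFst
  map_zero' := rfl
  map_add' φ ψ := AddEquiv.ext fun x => fst_apply φ (ψ (x, 0))

def inducedSndHom : AddAut (M × T) →+ AddAut T where
  toFun := inducedSnd
  map_zero' := rfl
  map_add' φ ψ := AddEquiv.ext fun t => congrArg (fun p => (φ p).2) (apply_zero_mk ψ t)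

def inducedProdHom : Multiplicative (AddAut (M × T)) →*
    Multiplicative (AddAut M) × Multiplicative (AddAut T) :=
  (AddMonoidHom.toMultiplicative inducedFstHom).prod
    (AddMonoidHom.toMultiplicative inducedSndHom)

theorem inducedProdHom_surjective :
    Function.Surjective (inducedProdHom : Multiplicative (AddAut (M × T)) →* _) :=
  fun ⟨a, b⟩ => ⟨ofAdd (AddEquiv.prodCongr a.toAdd b.toAdd), rfl⟩

theorem mem_ker_inducedProdHom {φ : AddAut (M × T)} :
    ofAdd φ ∈ (inducedProdHom : Multiplicative (AddAut (M × T)) →* _).ker ↔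
      inducedFst φ = 0 ∧ inducedSnd φ = 0 :=
  MonoidHom.mem_ker.trans Prod.mk_eq_one

theorem eq_shear_of_inducedFst_eq_zero_of_inducedSnd_eq_zero {φ : AddAut (M × T)}
    (hfst : inducedFst φ = 0) (hsnd : inducedSnd φ = 0) :
    φ = shear ((AddMonoidHom.snd M T).comp (φ.toAddMonoidHom.comp (AddMonoidHom.inl M T))) := by
  have hM (x : M) : (φ (x, 0)).1 = x := DFunLike.congr_fun hfst x
  have hT (t : T) : φ (0, t) = (0, t) :=
    (apply_zero_mk φ t).trans (congrArg _ (DFunLike.congr_fun hsnd t))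
  ext1 p
  calc φ p = φ (p.1, 0) + φ (0, p.2) := by rw [← map_add, Prod.mk_add_mk, add_zero, zero_add]
    _ = (p.1, (φ (p.1, 0)).2) + (0, p.2) := congrArg₂ (· + ·) (Prod.ext (hM p.1) rfl) (hT p.2)
    _ = _ := by simp [add_comm]

theorem range_shearHom :
    (AddMonoidHom.toMultiplicative (shearHom : (M →+ T) →+ AddAut (M × T))).range =
      inducedProdHom.ker := by
  ext φ
  constructor
  · rintro ⟨f, rfl⟩
    refine mem_ker_inducedProdHom.2 ⟨AddEquiv.ext fun _ => rfl, AddEquiv.ext fun t => ?_⟩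
    simp [shearHom, inducedSnd]
  · intro h
    obtain ⟨hfst, hsnd⟩ := mem_ker_inducedProdHom.1 h
    exact ⟨ofAdd _,
      congrArg ofAdd (eq_shear_of_inducedFst_eq_zero_of_inducedSnd_eq_zero hfst hsnd).symm⟩

noncomputable def kerInducedProdHomEquiv :
    Multiplicative (M →+ T) ≃* (inducedProdHom : Multiplicative (AddAut (M × T)) →* _).ker :=
  (MonoidHom.ofInjective shearHom_injective).trans (MulEquiv.subgroupCongr range_shearHom)

end AddAut

/-- For `A = ℤᵏ × T` with `T` finite abelian: every automorphism of `A` preserves the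
torsion subgroup `{0} × T`, the induced map `Aut(A) → Aut(ℤᵏ) × Aut(T)` is a surjective
group homomorphism, and its kernel is isomorphic as a group to `Hom(ℤᵏ, T)`. Hence there
is a short exact sequence `1 → Hom(ℤᵏ,T) → Aut(ℤᵏ × T) → Aut(ℤᵏ) × Aut(T) → 1`. -/
theorem aut_of_Zk_times_finite_short_exact
    (k : ℕ) (T : Type*) [AddCommGroup T] [Finite T] :
    (∀ φ : AddAut ((Fin k → ℤ) × T), ∀ t : T, (φ (0, t)).1 = 0) ∧
    ∃ Φ : Multiplicative (AddAut ((Fin k → ℤ) × T)) →*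
        Multiplicative (AddAut (Fin k → ℤ)) × Multiplicative (AddAut T),
      (∀ (φ : AddAut ((Fin k → ℤ) × T)) (x : Fin k → ℤ),
          (Multiplicative.toAdd (Φ (Multiplicative.ofAdd φ)).1) x = (φ (x, 0)).1) ∧
      (∀ (φ : AddAut ((Fin k → ℤ) × T)) (t : T),
          φ (0, t) = (0, (Multiplicative.toAdd (Φ (Multiplicative.ofAdd φ)).2) t)) ∧
      Function.Surjective Φ ∧
      Nonempty (Multiplicative ((Fin k → ℤ) →+ T) ≃* Φ.ker) := by
  have : Subsingleton (T →+ (Fin k → ℤ)) :=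
    AddMonoidHom.subsingleton_of_isAddTorsion isAddTorsion_of_finite
  exact ⟨AddAut.fst_apply_zero_mk, AddAut.inducedProdHom, fun _ _ => rfl, AddAut.apply_zero_mk,
    AddAut.inducedProdHom_surjective, ⟨AddAut.kerInducedProdHomEquiv⟩⟩
end
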